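/- Let h(x) = −2·log x_k + xᵀAx + ∑_{i=1}^{k−1} ρ(|x_i|; λ, γ) with A positive semidefinite, A_{ii} > 0 for all i, and MCP penalty ρ. If γ > max{1/(2A_{ii}), 1} for each i ∈ {1,…,k−1}, then for each fixed choice of the other coordinates, h is a strictly convex function of x_i. -/

import Mathlib

/-!
The concavity of the MCP is exactly cancelled by `θ² / (2γ)`: adding it turns the penalty into
`λ|θ| + (|θ| - γλ)₊² / (2γ)`, which is convex. Hence `c θ² + ρ(θ)` is strictly convex as soon as
`c > 1 / (2γ)`. As a function of the single coordinate `x_i` (`i < k`), the score is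
`A_ii x_i² + ρ(x_i)` plus an affine function of `x_i`, and `γ > 1 / (2A_ii)` says `A_ii > 1 / (2γ)`.
-/

open Matrix BigOperators

/-- The minimax concave penalty (MCP). -/
noncomputable def mcp (lam gam θ : ℝ) : ℝ :=
  if |θ| < gam * lam then lam * |θ| - θ ^ 2 / (2 * gam) else gam * lam ^ 2 / 2

theorem StrictConvexOn.smul {𝕜 E β : Type*} [CommSemiring 𝕜] [PartialOrder 𝕜] [AddCommMonoid E]
    [AddCommMonoid β] [PartialOrder β] [SMul 𝕜 E] [Module 𝕜 β] [PosSMulStrictMono 𝕜 β]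
    {s : Set E} {f : E → β} {c : 𝕜} (hc : 0 < c) (hf : StrictConvexOn 𝕜 s f) :
    StrictConvexOn 𝕜 s fun x => c • f x :=
  ⟨hf.1, fun x hx y hy hxy a b ha hb hab =>
    calc
      c • f (a • x + b • y) < c • (a • f x + b • f y) :=
        smul_lt_smul_of_pos_left (hf.2 hx hy hxy ha hb hab) hc
      _ = a • c • f x + b • c • f y := by rw [smul_add, smul_comm c, smul_comm c]⟩

theorem Finset.sum_apply_update_of_mem {ι M N : Type*} [DecidableEq ι] [AddCommMonoid N]
    {s : Finset ι} {i : ι} (hi : i ∈ s) (f : M → N) (x : ι → M) (t : M) :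
    ∑ j ∈ s, f (Function.update x i t j) = f t + ∑ j ∈ s \ {i}, f (x j) := by
  simpa only [← Function.comp_apply (f := f), Function.comp_update] using
    Finset.sum_update_of_mem hi (f ∘ x) (f t)

theorem update_eq_update_zero_add_single {n R : Type*} [DecidableEq n] [AddZeroClass R]
    (x : n → R) (i : n) (t : R) :
    Function.update x i t = Function.update x i 0 + Pi.single i t := by
  ext j
  rcases eq_or_ne j i with rfl | hj <;> simp [*]

theorem update_dotProduct_mulVec_update {n R : Type*} [Fintype n] [DecidableEq n] [CommRing R]
    (A : Matrix n n R) (x : n → R) (i : n) (t : R) :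
    Function.update x i t ⬝ᵥ (A *ᵥ Function.update x i t) =
      A i i * t ^ 2 + ((A *ᵥ Function.update x i 0) i + (Function.update x i 0 ᵥ* A) i) * t +
        Function.update x i 0 ⬝ᵥ (A *ᵥ Function.update x i 0) := by
  have hAe : (A *ᵥ Pi.single i t) i = A i i * t := by simp [mulVec_single]
  rw [update_eq_update_zero_add_single x i t, mulVec_add, dotProduct_add, add_dotProduct,
    add_dotProduct, single_dotProduct, single_dotProduct,
    dotProduct_mulVec (Function.update x i 0) A (Pi.single i t), dotProduct_single, hAe]
  ring

theorem mcp_add_sq_div_eq {lam gam : ℝ} (hgam : gam ≠ 0) (θ : ℝ) :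
    mcp lam gam θ + θ ^ 2 / (2 * gam) =
      lam * |θ| + (2 * gam)⁻¹ * max (|θ| - gam * lam) 0 ^ 2 := by
  unfold mcp
  split_ifs with h
  · rw [max_eq_right (by linarith)]
    ring
  · rw [max_eq_left (by linarith), ← sq_abs θ]
    field_simp
    ring

theorem convexOn_mcp_add_sq_div {lam gam : ℝ} (hlam : 0 ≤ lam) (hgam : 0 < gam) :
    ConvexOn ℝ Set.univ fun θ => mcp lam gam θ + θ ^ 2 / (2 * gam) := by
  simp only [mcp_add_sq_div_eq hgam.ne']
  have habs : ConvexOn ℝ Set.univ fun θ : ℝ => |θ| := convexOn_univ_norm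
  have hexcess : ConvexOn ℝ Set.univ fun θ : ℝ => max (|θ| - gam * lam) 0 ^ 2 :=
    ((habs.sub (concaveOn_const _ convex_univ)).sup (convexOn_const 0 convex_univ)).pow
      (fun _ _ => le_max_right _ _) 2
  exact (habs.smul hlam).add (hexcess.smul (by positivity))

theorem strictConvexOn_mul_sq_add_mcp {lam gam c : ℝ} (hlam : 0 ≤ lam) (hgam : 0 < gam)
    (hc : 1 / (2 * gam) < c) :
    StrictConvexOn ℝ Set.univ fun θ => c * θ ^ 2 + mcp lam gam θ := by
  have hsq : StrictConvexOn ℝ Set.univ fun θ : ℝ => (c - 1 / (2 * gam)) * θ ^ 2 :=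
    (Even.strictConvexOn_pow even_two two_ne_zero).smul (sub_pos.2 hc)
  refine (hsq.add_convexOn (convexOn_mcp_add_sq_div hlam hgam)).congr fun θ _ => ?_
  rw [Pi.add_apply]
  ring

theorem convexOn_mul_add (b d : ℝ) : ConvexOn ℝ Set.univ fun t : ℝ => b * t + d :=
  ((LinearMap.mulLeft ℝ b).convexOn convex_univ).add_const d

theorem coordinatewise_strict_convexity_general {k : ℕ}
    (A : Matrix (Fin (k + 1)) (Fin (k + 1)) ℝ)
    (hdiag : ∀ i, 0 < A i i) (lam gam : ℝ) (hlam : 0 ≤ lam)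
    (hgam : ∀ i : Fin (k + 1), i ≠ Fin.last k → max (1 / (2 * A i i)) 1 < gam)
    (x : Fin (k + 1) → ℝ) :
    ∀ i : Fin (k + 1), i ≠ Fin.last k →
      StrictConvexOn ℝ Set.univ (fun t : ℝ =>
        -2 * Real.log (Function.update x i t (Fin.last k)) +
          Function.update x i t ⬝ᵥ (A *ᵥ Function.update x i t) +
          ∑ j ∈ Finset.univ.erase (Fin.last k),
            mcp lam gam (Function.update x i t j)) := by
  intro i hi
  obtain ⟨hAi, hgam1⟩ := max_lt_iff.1 (hgam i hi)
  have hgam0 : 0 < gam := one_pos.trans hgam1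
  have hc : 1 / (2 * gam) < A i i := by
    rw [div_lt_iff₀ (mul_pos two_pos (hdiag i))] at hAi
    rw [div_lt_iff₀ (mul_pos two_pos hgam0)]
    linarith
  have hmem : i ∈ Finset.univ.erase (Fin.last k) := Finset.mem_erase.2 ⟨hi, Finset.mem_univ i⟩
  refine ((strictConvexOn_mul_sq_add_mcp hlam hgam0 hc).add_convexOn
    (convexOn_mul_add ((A *ᵥ Function.update x i 0) i + (Function.update x i 0 ᵥ* A) i)
      (-2 * Real.log (x (Fin.last k)) +
        Function.update x i 0 ⬝ᵥ (A *ᵥ Function.update x i 0) +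
        ∑ j ∈ Finset.univ.erase (Fin.last k) \ {i}, mcp lam gam (x j)))).congr fun t _ => ?_
  rw [Pi.add_apply, Function.update_of_ne hi.symm, update_dotProduct_mulVec_update A x i t,
    Finset.sum_apply_update_of_mem hmem]
  ring

/-- If `γ > max{1/(2A_ii), 1}`, then the coordinatewise Cholesky score
`h(x) = −2 log x_k + xᵀAx + ∑_{i<k} ρ(|x_i|; λ, γ)` is, for each `i < k` and
fixed other coordinates, a strictly convex function of `x_i`. -/
theorem coordinatewise_strict_convexity {k : ℕ}
    (A : Matrix (Fin (k + 1)) (Fin (k + 1)) ℝ) (hA : A.PosSemidef)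
    (hdiag : ∀ i, 0 < A i i) (lam gam : ℝ) (hlam : 0 ≤ lam)
    (hgam : ∀ i : Fin (k + 1), i ≠ Fin.last k → max (1 / (2 * A i i)) 1 < gam)
    (x : Fin (k + 1) → ℝ) (hx : 0 < x (Fin.last k)) :
    ∀ i : Fin (k + 1), i ≠ Fin.last k →
      StrictConvexOn ℝ Set.univ (fun t : ℝ =>
        -2 * Real.log (Function.update x i t (Fin.last k)) +
          Function.update x i t ⬝ᵥ (A *ᵥ Function.update x i t) +
          ∑ j ∈ Finset.univ.erase (Fin.last k),
            mcp lam gam (Function.update x i t j)) :=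
  coordinatewise_strict_convexity_general A hdiag lam gam hlam hgam x
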